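/- In the call-by-value large-elimination version of Tvec, the reducibility interpretation is preserved by CBV reduction (R-Pres): if a ∈ ⟦φ⟧ and a ⇝ᵥ a', then a' ∈ ⟦φ⟧. Prove this by induction on the depth of φ, using determinacy of call-by-value reduction. -/

import Mathlib

set_option autoImplicit true

/-- Terms of Tvec with quasi-implicit products: λ.a (ilam) and a· (iapp). -/
inductive Tm : Type
  | var (x : String)
  | app (a b : Tm)
  | lam (x : String) (a : Tm)
  | ilam (a : Tm)
  | iapp (a : Tm)
  | zero
  | succ (a : Tm)
  | rnat (a a' a'' : Tm)
  | nil
  | cons (a a' : Tm)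
  | rvec (a a' a'' : Tm)
  | join
  deriving DecidableEq

/-- Types, with the type-level conditional ifzero. -/
inductive Ty : Type
  | nat
  | vec (phi : Ty) (l : Tm)
  | pi (x : String) (phi' phi : Ty)
  | all (x : String) (phi' phi : Ty)
  | eq (a a' : Tm)
  | ifz (b : Tm) (phi phi' : Ty)
  deriving DecidableEq

/-- Substitution [b/x] on terms. -/
def subst (b : Tm) (x : String) : Tm → Tm
  | .var y => if y = x then b else .var y
  | .app t u => .app (subst b x t) (subst b x u)
  | .lam y t => if y = x then .lam y t else .lam y (subst b x t)
  | .ilam t => .ilam (subst b x t)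
  | .iapp t => .iapp (subst b x t)
  | .zero => .zero
  | .succ t => .succ (subst b x t)
  | .rnat t u v => .rnat (subst b x t) (subst b x u) (subst b x v)
  | .nil => .nil
  | .cons t u => .cons (subst b x t) (subst b x u)
  | .rvec t u v => .rvec (subst b x t) (subst b x u) (subst b x v)
  | .join => .join

/-- Substitution [b/x] on types. -/
def substTy (b : Tm) (x : String) : Ty → Ty
  | .nat => .nat
  | .vec phi l => .vec (substTy b x phi) (subst b x l)
  | .pi y phi' phi =>
      if y = x then .pi y (substTy b x phi') phi
      else .pi y (substTy b x phi') (substTy b x phi)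
  | .all y phi' phi =>
      if y = x then .all y (substTy b x phi') phi
      else .all y (substTy b x phi') (substTy b x phi)
  | .eq a a' => .eq (subst b x a) (subst b x a')
  | .ifz c phi phi' => .ifz (subst b x c) (substTy b x phi) (substTy b x phi')

/-- Simultaneous substitution [b/y, c/x] on terms. -/
def subst2 (b : Tm) (y : String) (c : Tm) (x : String) : Tm → Tm
  | .var z => if z = y then b else if z = x then c else .var z
  | .app t u => .app (subst2 b y c x t) (subst2 b y c x u)
  | .lam z t =>
      if z = y then (if z = x then .lam z t else .lam z (subst c x t))
      else if z = x then .lam z (subst b y t)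
      else .lam z (subst2 b y c x t)
  | .ilam t => .ilam (subst2 b y c x t)
  | .iapp t => .iapp (subst2 b y c x t)
  | .zero => .zero
  | .succ t => .succ (subst2 b y c x t)
  | .rnat t u v => .rnat (subst2 b y c x t) (subst2 b y c x u) (subst2 b y c x v)
  | .nil => .nil
  | .cons t u => .cons (subst2 b y c x t) (subst2 b y c x u)
  | .rvec t u v => .rvec (subst2 b y c x t) (subst2 b y c x u) (subst2 b y c x v)
  | .join => .join

/-- Simultaneous substitution [b/y, c/x] on types. -/
def subst2Ty (b : Tm) (y : String) (c : Tm) (x : String) : Ty → Ty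
  | .nat => .nat
  | .vec phi l => .vec (subst2Ty b y c x phi) (subst2 b y c x l)
  | .pi z phi' phi =>
      .pi z (subst2Ty b y c x phi')
        (if z = y then (if z = x then phi else substTy c x phi)
         else if z = x then substTy b y phi
         else subst2Ty b y c x phi)
  | .all z phi' phi =>
      .all z (subst2Ty b y c x phi')
        (if z = y then (if z = x then phi else substTy c x phi)
         else if z = x then substTy b y phi
         else subst2Ty b y c x phi)
  | .eq a a' => .eq (subst2 b y c x a) (subst2 b y c x a')
  | .ifz d phi phi' => .ifz (subst2 b y c x d) (subst2Ty b y c x phi) (subst2Ty b y c x phi')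

/-- Free variables of a term. -/
def FV : Tm → Finset String
  | .var x => {x}
  | .app t u => FV t ∪ FV u
  | .lam y t => FV t \ {y}
  | .ilam t => FV t
  | .iapp t => FV t
  | .zero => ∅
  | .succ t => FV t
  | .rnat t u v => FV t ∪ FV u ∪ FV v
  | .nil => ∅
  | .cons t u => FV t ∪ FV u
  | .rvec t u v => FV t ∪ FV u ∪ FV v
  | .join => ∅

/-- Free variables of a type. -/
def FVTy : Ty → Finset String
  | .nat => ∅
  | .vec phi l => FVTy phi ∪ FV l
  | .pi y phi' phi => FVTy phi' ∪ (FVTy phi \ {y})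
  | .all y phi' phi => FVTy phi' ∪ (FVTy phi \ {y})
  | .eq a a' => FV a ∪ FV a'
  | .ifz b phi phi' => FV b ∪ FVTy phi ∪ FVTy phi'

/-- Numerals. -/
def num : Nat → Tm
  | 0 => .zero
  | n + 1 => .succ (num n)

/-- Values for the CBV large-elimination language. -/
inductive IsValueV : Tm → Prop
  | lam : IsValueV (.lam x a)
  | ilam : IsValueV (.ilam a)
  | zero : IsValueV .zero
  | succ : IsValueV v → IsValueV (.succ v)
  | nil : IsValueV .nil
  | cons : IsValueV v → IsValueV v' → IsValueV (.cons v v')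
  | join : IsValueV .join

/-- Unrestricted (full beta) reduction ⇝: compatible closure everywhere. -/
inductive StepB : Tm → Tm → Prop
  | beta : StepB (.app (.lam x a) b) (subst b x a)
  | ibeta : StepB (.iapp (.ilam a)) a
  | rnatZero : StepB (.rnat a a' .zero) a
  | rnatSucc : StepB (.rnat a a' (.succ b)) (.app (.app a' b) (.rnat a a' b))
  | rvecNil : StepB (.rvec a a' .nil) a
  | rvecCons : StepB (.rvec a a' (.cons b c)) (.app (.app (.app a' b) c) (.rvec a a' c))
  | appLeft : StepB a a' → StepB (.app a b) (.app a' b)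
  | appRight : StepB b b' → StepB (.app a b) (.app a b')
  | lamBody : StepB a a' → StepB (.lam x a) (.lam x a')
  | ilamBody : StepB a a' → StepB (.ilam a) (.ilam a')
  | iappArg : StepB a a' → StepB (.iapp a) (.iapp a')
  | succArg : StepB a a' → StepB (.succ a) (.succ a')
  | consLeft : StepB a a' → StepB (.cons a b) (.cons a' b)
  | consRight : StepB b b' → StepB (.cons a b) (.cons a b')
  | rnat1 : StepB a a₂ → StepB (.rnat a b c) (.rnat a₂ b c)
  | rnat2 : StepB b b₂ → StepB (.rnat a b c) (.rnat a b₂ c)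
  | rnat3 : StepB c c₂ → StepB (.rnat a b c) (.rnat a b c₂)
  | rvec1 : StepB a a₂ → StepB (.rvec a b c) (.rvec a₂ b c)
  | rvec2 : StepB b b₂ → StepB (.rvec a b c) (.rvec a b₂ c)
  | rvec3 : StepB c c₂ → StepB (.rvec a b c) (.rvec a b c₂)

def StarB : Tm → Tm → Prop := Relation.ReflTransGen StepB

/-- Joinability a ↓ a' under full beta reduction. -/
def JoinB (a a' : Tm) : Prop := ∃ c, StarB a c ∧ StarB a' c

/-- Call-by-value evaluation ⇝ᵥ: left-to-right, no reduction under binders. -/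
inductive StepV : Tm → Tm → Prop
  | beta : IsValueV v → StepV (.app (.lam x a) v) (subst v x a)
  | ibeta : StepV (.iapp (.ilam a)) a
  | rnatZero : IsValueV v → IsValueV v' → StepV (.rnat v v' .zero) v
  | rnatSucc : IsValueV v → IsValueV v' → IsValueV u →
      StepV (.rnat v v' (.succ u)) (.app (.app v' u) (.rnat v v' u))
  | rvecNil : IsValueV v → IsValueV v' → StepV (.rvec v v' .nil) v
  | rvecCons : IsValueV v → IsValueV v' → IsValueV u → IsValueV u' →
      StepV (.rvec v v' (.cons u u')) (.app (.app (.app v' u) u') (.rvec v v' u'))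
  | appLeft : StepV a a' → StepV (.app a b) (.app a' b)
  | appRight : IsValueV v → StepV b b' → StepV (.app v b) (.app v b')
  | iappArg : StepV a a' → StepV (.iapp a) (.iapp a')
  | succArg : StepV a a' → StepV (.succ a) (.succ a')
  | consLeft : StepV a a' → StepV (.cons a b) (.cons a' b)
  | consRight : IsValueV v → StepV b b' → StepV (.cons v b) (.cons v b')
  | rnat1 : StepV a a₂ → StepV (.rnat a b c) (.rnat a₂ b c)
  | rnat2 : IsValueV v → StepV b b₂ → StepV (.rnat v b c) (.rnat v b₂ c)
  | rnat3 : IsValueV v → IsValueV v' → StepV c c₂ → StepV (.rnat v v' c) (.rnat v v' c₂)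
  | rvec1 : StepV a a₂ → StepV (.rvec a b c) (.rvec a₂ b c)
  | rvec2 : IsValueV v → StepV b b₂ → StepV (.rvec v b c) (.rvec v b₂ c)
  | rvec3 : IsValueV v → IsValueV v' → StepV c c₂ → StepV (.rvec v v' c) (.rvec v v' c₂)

def StarV : Tm → Tm → Prop := Relation.ReflTransGen StepV

/-- Depth of a type. -/
def depth : Ty → Nat
  | .nat => 0
  | .vec phi _ => depth phi + 1
  | .pi _ phi' phi => max (depth phi') (depth phi) + 1
  | .all _ phi' phi => max (depth phi') (depth phi) + 1
  | .eq _ _ => 0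
  | .ifz _ phi phi' => max (depth phi) (depth phi') + 1

theorem depth_substTy (b : Tm) (x : String) : ∀ phi, depth (substTy b x phi) = depth phi
  | .nat => rfl
  | .vec phi l => by simp [substTy, depth, depth_substTy b x phi]
  | .pi y phi' phi => by
      by_cases h : y = x <;>
        simp [substTy, h, depth, depth_substTy b x phi', depth_substTy b x phi]
  | .all y phi' phi => by
      by_cases h : y = x <;>
        simp [substTy, h, depth, depth_substTy b x phi', depth_substTy b x phi]
  | .eq _ _ => rfl
  | .ifz c phi phi' => by
      simp [substTy, depth, depth_substTy b x phi, depth_substTy b x phi']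

/-- The interpretation of vector types (least fixed point in the tail). -/
inductive VecIV (IP : Tm → Prop) : Tm → Tm → Prop
  | nil : StarV a .nil → StarB l .zero → VecIV IP l a
  | cons : StarV a (.cons v v') → StarB l (.succ (num n)) → IP v →
      VecIV IP (num n) v' → VecIV IP l a

/-- The closed-term interpretation ⟦φ⟧ for the CBV large-elimination language. -/
def Interp : Ty → Tm → Prop
  | .nat, a => ∃ n, StarV a (num n)
  | .vec phi l, a => VecIV (fun t => Interp phi t) l a
  | .pi x phi' phi, a => (∃ y b, StarV a (.lam y b)) ∧
      ∀ a', Interp phi' a' → Interp (substTy a' x phi) (.app a a')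
  | .all x phi' phi, a => (∃ b, StarV a (.ilam b)) ∧
      ∀ a', Interp phi' a' → Interp (substTy a' x phi) (.iapp a)
  | .eq a₁ a₂, a => StarV a .join ∧ JoinB a₁ a₂
  | .ifz b phi phi', a =>
      (StarB b .zero ∧ Interp phi a) ∨
      ((∃ n, StarB b (.succ (num n))) ∧ Interp phi' a)
termination_by phi _ => depth phi
decreasing_by all_goals (simp only [depth, depth_substTy]; omega)

/-- Typing contexts. -/
abbrev Ctx := List (String × Ty)

def dom (Γ : Ctx) : Finset String := (Γ.map Prod.fst).toFinset

def lookupC (Γ : Ctx) (x : String) : Option Ty :=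
  (Γ.find? (fun p => p.1 == x)).map Prod.snd

def Ok : Ctx → Prop
  | [] => True
  | (x, phi) :: Γ => x ∉ dom Γ ∧ FVTy phi ⊆ dom Γ ∧ Ok Γ

/-- Typing for the CBV large-elimination version of Tvec: the unannotated rules
with spec-abs'/spec-app' (quasi-implicit products) and fold/unfold for ifzero. -/
inductive TypingL : Ctx → Tm → Ty → Prop
  | var : lookupC Γ x = some phi → Ok Γ → TypingL Γ (.var x) phi
  | join : JoinB a a' → Ok Γ → TypingL Γ .join (.eq a a')
  | conv : TypingL Γ p (.eq a' a'') → TypingL Γ a (substTy a' x phi) → x ∉ dom Γ →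
      TypingL Γ a (substTy a'' x phi)
  | specAbs : TypingL ((x, phi') :: Γ) a phi → x ∉ FV a →
      TypingL Γ (.ilam a) (.all x phi' phi)
  | specApp : TypingL Γ a (.all x phi' phi) → TypingL Γ a' phi' →
      TypingL Γ (.iapp a) (substTy a' x phi)
  | abs : TypingL ((x, phi') :: Γ) a phi → TypingL Γ (.lam x a) (.pi x phi' phi)
  | app : TypingL Γ a (.pi x phi' phi) → TypingL Γ b phi' →
      TypingL Γ (.app a b) (substTy b x phi)
  | zero : Ok Γ → TypingL Γ .zero .nat
  | succ : TypingL Γ a .nat → TypingL Γ (.succ a) .nat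
  | nil : Ok Γ → TypingL Γ .nil (.vec phi .zero)
  | cons : TypingL Γ a phi → TypingL Γ a' (.vec phi l) →
      TypingL Γ (.cons a a') (.vec phi (.succ l))
  | rnat : x ∉ dom Γ → TypingL Γ a'' .nat → TypingL Γ a (substTy .zero x phi) →
      TypingL Γ a' (.pi y .nat (.pi u (substTy (.var y) x phi)
        (substTy (.succ (.var y)) x phi))) →
      TypingL Γ (.rnat a a' a'') (substTy a'' x phi)
  | rvec : x ∉ dom Γ → TypingL Γ a'' (.vec phi' l) →
      TypingL Γ a (subst2Ty .zero y .nil x phi) →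
      TypingL Γ a' (.pi z phi' (.all lv .nat (.pi v (.vec phi' (.var lv)) (.pi u
        (subst2Ty (.var lv) y (.var v) x phi)
        (subst2Ty (.succ (.var lv)) y (.cons (.var z) (.var v)) x phi))))) →
      TypingL Γ (.rvec a a' a'') (subst2Ty l y a'' x phi)
  | foldZ : TypingL Γ a phi → TypingL Γ a (.ifz .zero phi phi')
  | unfoldZ : TypingL Γ a (.ifz .zero phi phi') → TypingL Γ a phi
  | foldS : TypingL Γ a phi' → TypingL Γ a' .nat →
      TypingL Γ a (.ifz (.succ a') phi phi')
  | unfoldS : TypingL Γ a (.ifz (.succ a') phi phi') → TypingL Γ a' .nat →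
      TypingL Γ a phi'

/-- Substitutions. -/
abbrev TSub := List (String × Tm)

def appS (σ : TSub) (t : Tm) : Tm := σ.foldr (fun p t => subst p.2 p.1 t) t

def appSTy (σ : TSub) (phi : Ty) : Ty := σ.foldr (fun p phi => substTy p.2 p.1 phi) phi

/-- σ ∈ ⟦Γ⟧: σ maps each variable of Γ to a value in the interpretation of its
(substituted) type. -/
def GSub : Ctx → TSub → Prop
  | [], σ => σ = []
  | (x, phi) :: Γ, σ =>
      ∃ v σ', σ = (x, v) :: σ' ∧ IsValueV v ∧ Interp (appSTy σ' phi) v ∧ GSub Γ σ'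

/-!
Every clause of `⟦φ⟧` either asks that `a` evaluate to a value of a given shape, or speaks about
`a a'`, `a ·` or `a` itself at types of smaller depth (substitution preserves depth). Since
call-by-value reduction is deterministic, a step `a ⇝ᵥ a'` lies on the evaluation path of `a`, so
`a'` evaluates to the same value; the applications `a a'` and `a ·` step along with `a`, and the
induction hypothesis takes care of the rest. For vectors the evaluation may stop at `cons v v'`
itself, and then the step happens inside `v` or `v'`.
-/

namespace Relation.ReflTransGen

variable {α : Type*} {r : α → α → Prop} {a a' b : α}

theorem eq_or_of_head_of_rightUnique (hr : Relator.RightUnique r) (hab : ReflTransGen r a b)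
    (ha : r a a') : a = b ∨ ReflTransGen r a' b := by
  rcases hab.cases_head with rfl | ⟨c, hac, hcb⟩
  · exact .inl rfl
  · exact .inr (hr ha hac ▸ hcb)

theorem of_head_of_rightUnique (hr : Relator.RightUnique r) (hab : ReflTransGen r a b)
    (hb : ∀ c, ¬ r b c) (ha : r a a') : ReflTransGen r a' b :=
  (hab.eq_or_of_head_of_rightUnique hr ha).resolve_left fun h => hb a' (h ▸ ha)

end Relation.ReflTransGen

theorem IsValueV.not_stepV {v w : Tm} (hv : IsValueV v) : ¬ StepV v w := by
  induction hv generalizing w <;> rintro ⟨⟩ <;> grind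

theorem stepV_rightUnique : Relator.RightUnique StepV := by
  intro a b c h1 h2
  induction h1 generalizing c <;> cases h2 <;> grind [IsValueV.not_stepV, IsValueV]

theorem isValueV_num (n : Nat) : IsValueV (num n) := by
  induction n with
  | zero => exact .zero
  | succ n ih => exact .succ ih

theorem StarV.of_stepV {a a' v : Tm} (hav : StarV a v) (hv : IsValueV v) (ha : StepV a a') :
    StarV a' v :=
  Relation.ReflTransGen.of_head_of_rightUnique stepV_rightUnique hav
    (fun _ => hv.not_stepV) ha

theorem VecIV.of_stepV {IP : Tm → Prop} (hIP : ∀ t t', IP t → StepV t t' → IP t')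
    {l a a' : Tm} (h : VecIV IP l a) (hs : StepV a a') : VecIV IP l a' := by
  induction h generalizing a' with
  | nil hnil hl => exact .nil (hnil.of_stepV .nil hs) hl
  | cons hcons hl hhead htail ih =>
    rcases hcons.eq_or_of_head_of_rightUnique stepV_rightUnique hs with rfl | hcons'
    · cases hs with
      | consLeft hs => exact .cons .refl hl (hIP _ _ hhead hs) htail
      | consRight _ hs => exact .cons .refl hl hhead (ih hs)
    · exact .cons hcons' hl hhead htail

/-- R-Pres for the CBV large-elimination interpretation. -/
theorem interp_pres (phi : Ty) (a a' : Tm)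
    (h : Interp phi a) (hs : StepV a a') : Interp phi a' := by
  match phi with
  | .nat =>
    rw [Interp] at h ⊢
    exact h.imp fun n hn => hn.of_stepV (isValueV_num n) hs
  | .eq a₁ a₂ =>
    rw [Interp] at h ⊢
    exact ⟨h.1.of_stepV .join hs, h.2⟩
  | .vec phi l =>
    rw [Interp] at h ⊢
    exact h.of_stepV (fun t t' => interp_pres phi t t') hs
  | .pi x phi' phi =>
    rw [Interp] at h ⊢
    obtain ⟨⟨y, b, hlam⟩, happ⟩ := h
    exact ⟨⟨y, b, hlam.of_stepV .lam hs⟩,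
      fun a₂ ha₂ => interp_pres _ _ _ (happ a₂ ha₂) (.appLeft hs)⟩
  | .all x phi' phi =>
    rw [Interp] at h ⊢
    obtain ⟨⟨b, hilam⟩, hiapp⟩ := h
    exact ⟨⟨b, hilam.of_stepV .ilam hs⟩,
      fun a₂ ha₂ => interp_pres _ _ _ (hiapp a₂ ha₂) (.iappArg hs)⟩
  | .ifz b phi phi' =>
    rw [Interp] at h ⊢
    exact h.imp (And.imp_right (interp_pres phi a a' · hs))
      (And.imp_right (interp_pres phi' a a' · hs))
termination_by depth phi
decreasing_by all_goals simp only [depth, depth_substTy]; omega
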